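/- arXiv:2111.05239 — 2 statements merged into one kernel-verified Lean document; each statement's English description precedes it below -/
import Mathlib

section
/- Every connected regular bipartite graph of diameter 3 and girth 6 is a design graph with parameter c = 1, i.e., any two distinct vertices in the same part have exactly one common neighbor. -/
open scoped Classical

/-- `G` is a design graph with parameters `(m, d, c)`: a `d`-regular bipartite graph with
parts `V₁`, `V₂` each of size `m`, in which any two distinct vertices of the same part have
exactly `c ≠ 0` common neighbors, and which is not complete bipartite. -/
def SimpleGraph.IsDesignGraph {V : Type*} (G : SimpleGraph V) (V₁ V₂ : Set V)
    (m d c : ℕ) : Prop :=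
  c ≠ 0 ∧ Disjoint V₁ V₂ ∧ V₁ ∪ V₂ = Set.univ ∧ V₁.ncard = m ∧ V₂.ncard = m ∧
  (∀ v w, G.Adj v w → (v ∈ V₁ ∧ w ∈ V₂) ∨ (v ∈ V₂ ∧ w ∈ V₁)) ∧
  (∀ v, (G.neighborSet v).ncard = d) ∧
  (∀ v w, v ≠ w → (v ∈ V₁ ∧ w ∈ V₁) ∨ (v ∈ V₂ ∧ w ∈ V₂) →
    (G.neighborSet v ∩ G.neighborSet w).ncard = c) ∧
  ¬ (∀ v ∈ V₁, ∀ w ∈ V₂, G.Adj v w)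

/-! Two distinct vertices in the same part are joined by walks of even length only, and their
distance is at most the diameter 3, so it is 2: they have a common neighbor. A second common
neighbor would close a 4-cycle, which girth 6 excludes. -/

namespace SimpleGraph

variable {V : Type*} {G : SimpleGraph V} {s t : Set V} {u v : V}

theorem IsBipartiteWith.even_length_iff (h : G.IsBipartiteWith s t) (p : G.Walk u v) :
    Even p.length ↔ (u ∈ s ↔ v ∈ s) := by
  let c : G.Coloring Bool := Coloring.mk (fun x ↦ decide (x ∈ s)) fun hadj ↦ by
    rcases h.mem_of_adj hadj with ⟨hx, hy⟩ | ⟨hx, hy⟩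
    · simp [hx, h.disjoint.notMem_of_mem_right hy]
    · simp [hy, h.disjoint.notMem_of_mem_right hx]
  have hc := c.even_length_iff_congr p
  change Even p.length ↔ (decide (u ∈ s) = true ↔ decide (v ∈ s) = true) at hc
  simpa using hc

theorem IsBipartiteWith.edist_eq_two_of_edist_le_three (h : G.IsBipartiteWith s t) (huv : u ≠ v)
    (hs : u ∈ s ↔ v ∈ s) (hle : G.edist u v ≤ 3) : G.edist u v = 2 := by
  obtain ⟨p, hp⟩ := exists_walk_of_edist_ne_top (hle.trans_lt (by decide)).ne
  have hlen : p.length ≤ 3 := by exact_mod_cast hp ▸ hle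
  have hpos : p.length ≠ 0 := fun h0 ↦ huv (p.eq_of_length_eq_zero h0)
  obtain ⟨k, hk⟩ := (h.even_length_iff p).mpr hs
  rw [← hp, show p.length = 2 by omega, Nat.cast_ofNat]

theorem commonNeighbors_subsingleton_of_four_lt_egirth (hgirth : 4 < G.egirth) (huv : u ≠ v) :
    (G.commonNeighbors u v).Subsingleton := by
  intro x hx y hy
  by_contra hxy
  obtain ⟨hux, hvx⟩ := G.mem_commonNeighbors.mp hx
  obtain ⟨huy, hvy⟩ := G.mem_commonNeighbors.mp hy
  have hc : (Walk.cons hux (.cons hvx.symm (.cons hvy (.cons huy.symm .nil)))).IsCycle := by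
    simp [Walk.cons_isCycle_iff, hxy, huv, huv.symm, hux.ne, huy.ne, hvy.ne, hux.ne', huy.ne',
      hvx.ne']
  have := hgirth.trans_le (egirth_le_length hc)
  norm_num at this

end SimpleGraph

theorem stmt_3_general {V : Type*} (G : SimpleGraph V) (V₁ V₂ : Set V)
    (hdisj : Disjoint V₁ V₂)
    (hbip : ∀ v w, G.Adj v w → (v ∈ V₁ ∧ w ∈ V₂) ∨ (v ∈ V₂ ∧ w ∈ V₁))
    (hdiam : G.ediam = 3) (hgirth : G.egirth = 6) :
    ∀ v w, v ≠ w → (v ∈ V₁ ∧ w ∈ V₁) ∨ (v ∈ V₂ ∧ w ∈ V₂) →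
      (G.neighborSet v ∩ G.neighborSet w).ncard = 1 := by
  intro v w hvw hsame
  have hG : G.IsBipartiteWith V₁ V₂ := ⟨hdisj, fun x y ↦ hbip x y⟩
  have hpart : v ∈ V₁ ↔ w ∈ V₁ := by
    rcases hsame with ⟨hv, hw⟩ | ⟨hv, hw⟩
    · exact iff_of_true hv hw
    · exact iff_of_false (hdisj.notMem_of_mem_right hv) (hdisj.notMem_of_mem_right hw)
  have hdist : G.edist v w = 2 :=
    hG.edist_eq_two_of_edist_le_three hvw hpart (hdiam ▸ SimpleGraph.edist_le_ediam)
  obtain ⟨x, hx⟩ := (SimpleGraph.edist_eq_two_iff.mp hdist).2.2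
  have hunique := SimpleGraph.commonNeighbors_subsingleton_of_four_lt_egirth
    (by rw [hgirth]; decide) hvw
  rw [← SimpleGraph.commonNeighbors_eq, Set.ncard_eq_one]
  exact ⟨x, hunique.eq_singleton_of_mem hx⟩

theorem stmt_3 {V : Type*} (G : SimpleGraph V) (V₁ V₂ : Set V) (d : ℕ)
    (hconn : G.Connected)
    (hdisj : Disjoint V₁ V₂) (hcover : V₁ ∪ V₂ = Set.univ)
    (hbip : ∀ v w, G.Adj v w → (v ∈ V₁ ∧ w ∈ V₂) ∨ (v ∈ V₂ ∧ w ∈ V₁))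
    (hreg : ∀ v, (G.neighborSet v).ncard = d)
    (hdiam : G.ediam = 3) (hgirth : G.egirth = 6) :
    ∀ v w, v ≠ w → (v ∈ V₁ ∧ w ∈ V₁) ∨ (v ∈ V₂ ∧ w ∈ V₂) →
      (G.neighborSet v ∩ G.neighborSet w).ncard = 1 :=
  stmt_3_general G V₁ V₂ hdisj hbip hdiam hgirth
end

section
/- Let G be a vertex-transitive graph with distance matrix D, and let H ≤ Aut(G) have an orbit partition π containing a singleton cell {x}. Then the set of distinct eigenvalues of the quotient matrix Q of D over π equals the set of distinct eigenvalues of D. -/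
open scoped Classical

/-- The distance matrix of a graph `G`, with real entries. -/
noncomputable def SimpleGraph.distMatrix {V : Type*} [Fintype V] (G : SimpleGraph V) :
    Matrix V V ℝ :=
  Matrix.of fun u v => (G.dist u v : ℝ)

/-- `θ` is an eigenvalue of the square real matrix `M`. -/
def Matrix.HasEigenval {ι : Type*} [Fintype ι] (M : Matrix ι ι ℝ) (θ : ℝ) : Prop :=
  ∃ f : ι → ℝ, f ≠ 0 ∧ M.mulVec f = θ • f

/-!
Write `idx : V → ι` for the map sending a vertex to its cell. Since the partition is equitable,
`D *ᵥ (f ∘ idx) = (Q *ᵥ f) ∘ idx`, so the eigenvalues of `Q` are exactly the eigenvalues of `D`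
having an eigenvector constant on the cells. Every `H`-invariant function is constant on the
cells. Conversely, given an eigenvector `f` of `D` with `f v ≠ 0`, choose an automorphism `g`
with `g x = v` and average `f ∘ g` over `H`: the result is again an eigenvector (automorphisms
preserve distances), it is `H`-invariant, and since `H` fixes `x` its value at `x` is
`|H| f v ≠ 0`.
-/

open scoped Matrix

namespace Matrix

variable {V ι R : Type*} [Fintype V] [Fintype ι]

theorem mulVec_comp_equiv_of_submatrix_eq [NonUnitalNonAssocSemiring R] {M : Matrix V V R}
    {e : V ≃ V} (hM : M.submatrix e e = M) (f : V → R) : M *ᵥ (f ∘ e) = (M *ᵥ f) ∘ e := by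
  conv_lhs => rw [← hM]
  rw [submatrix_mulVec_equiv, Function.comp_assoc, e.self_comp_symm, Function.comp_id]

theorem mulVec_comp_of_sum_fiber_eq [NonUnitalNonAssocSemiring R] {M : Matrix V V R}
    {Q : Matrix ι ι R} {idx : V → ι}
    (hQ : ∀ v j, ∑ w with idx w = j, M v w = Q (idx v) j) (f : ι → R) :
    M *ᵥ (f ∘ idx) = (Q *ᵥ f) ∘ idx := by
  funext v
  calc ∑ w, M v w * f (idx w)
      = ∑ j, ∑ w with idx w = j, M v w * f (idx w) := (Finset.sum_fiberwise _ _ _).symm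
    _ = ∑ j, Q (idx v) j * f j := by
      refine Finset.sum_congr rfl fun j _ => ?_
      rw [← hQ v j, Finset.sum_mul]
      exact Finset.sum_congr rfl fun w hw => by rw [(Finset.mem_filter.mp hw).2]

theorem hasEigenval_iff_of_sum_fiber_eq {M : Matrix V V ℝ} {Q : Matrix ι ι ℝ} {idx : V → ι}
    (hidx : Function.Surjective idx) (hQ : ∀ v j, ∑ w with idx w = j, M v w = Q (idx v) j)
    (θ : ℝ) :
    Q.HasEigenval θ ↔
      ∃ F : V → ℝ, F ≠ 0 ∧ M *ᵥ F = θ • F ∧ ∀ v w, idx v = idx w → F v = F w := by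
  constructor
  · rintro ⟨f, hf0, hf⟩
    refine ⟨f ∘ idx, fun h => hf0 (hidx.injective_comp_right h), ?_, fun v w h => by simp [h]⟩
    rw [mulVec_comp_of_sum_fiber_eq hQ, hf]
    rfl
  · rintro ⟨F, hF0, hF, hconst⟩
    have hfactor : (F ∘ Function.surjInv hidx) ∘ idx = F :=
      funext fun v => hconst _ _ (Function.surjInv_eq hidx (idx v))
    refine ⟨F ∘ Function.surjInv hidx, fun h => hF0 (by rw [← hfactor, h]; rfl), ?_⟩
    apply hidx.injective_comp_right
    change (Q *ᵥ _) ∘ idx = (θ • _) ∘ idx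
    rw [← mulVec_comp_of_sum_fiber_eq hQ, hfactor, hF]
    exact congrArg (θ • ·) hfactor.symm

end Matrix

namespace SimpleGraph

variable {V W : Type*} {G : SimpleGraph V} {G' : SimpleGraph W}

instance Iso.instFinite [Finite V] : Finite (G ≃g G) :=
  Finite.of_injective _ DFunLike.coe_injective

theorem Reachable.dist_map_le (f : G →g G') {u v : V} (h : G.Reachable u v) :
    G'.dist (f u) (f v) ≤ G.dist u v := by
  obtain ⟨p, hp⟩ := h.exists_walk_length_eq_dist
  exact (dist_le (p.map f)).trans_eq ((p.length_map f).trans hp)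

theorem Iso.dist_map (e : G ≃g G') (u v : V) : G'.dist (e u) (e v) = G.dist u v := by
  by_cases h : G.Reachable u v
  · refine le_antisymm (h.dist_map_le e.toHom) ?_
    simpa using (h.map e.toHom).dist_map_le e.symm.toHom
  · rw [dist_eq_zero_of_not_reachable h, dist_eq_zero_of_not_reachable (mt Iso.reachable_iff.1 h)]

variable [Fintype V]

theorem distMatrix_mulVec_comp (e : G ≃g G) (f : V → ℝ) :
    G.distMatrix *ᵥ (f ∘ e) = (G.distMatrix *ᵥ f) ∘ e :=
  Matrix.mulVec_comp_equiv_of_submatrix_eq (e := e.toEquiv)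
    (Matrix.ext fun u v => by simp [distMatrix, e.dist_map]) f

theorem exists_distMatrix_eigenvector_invariant (htrans : ∀ u v : V, ∃ g : G ≃g G, g u = v)
    {H : Subgroup (G ≃g G)} {x : V} (hfix : ∀ h ∈ H, h x = x) {θ : ℝ}
    (hθ : G.distMatrix.HasEigenval θ) :
    ∃ F : V → ℝ, F ≠ 0 ∧ G.distMatrix *ᵥ F = θ • F ∧ ∀ h ∈ H, ∀ w, F (h w) = F w := by
  have : Fintype H := Fintype.ofFinite H
  obtain ⟨f, hf0, hf⟩ := hθ
  obtain ⟨v, hv⟩ := Function.ne_iff.mp hf0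
  obtain ⟨g, rfl⟩ := htrans x v
  refine ⟨∑ h : H, f ∘ g ∘ (h : G ≃g G), fun h0 => hv ?_, ?_, fun h₀ hh₀ w => ?_⟩
  · have hx : (∑ h : H, f ∘ g ∘ (h : G ≃g G)) x = Fintype.card H * f (g x) := by
      simp [Finset.sum_apply, hfix _ (SetLike.coe_mem _)]
    rw [h0, Pi.zero_apply, eq_comm, mul_eq_zero] at hx
    exact hx.resolve_left (Nat.cast_ne_zero.mpr Fintype.card_ne_zero)
  · simp only [Matrix.mulVec_sum, Finset.smul_sum, ← Function.comp_assoc,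
      distMatrix_mulVec_comp, hf]
    rfl
  · simp only [Finset.sum_apply, Function.comp_apply]
    exact Fintype.sum_equiv (Equiv.mulRight ⟨h₀, hh₀⟩) _ _ fun h => by simp [RelIso.mul_apply]

end SimpleGraph

theorem exists_index_of_existsUnique_mem {V ι : Type*} {cells : ι → Finset V}
    (hpart : ∀ v : V, ∃! i, v ∈ cells i) : ∃ idx : V → ι, ∀ v i, v ∈ cells i ↔ idx v = i := by
  choose idx hidx using fun v => (hpart v).exists
  exact ⟨idx, fun v i => ⟨fun h => (hpart v).unique (hidx v) h, fun h => h ▸ hidx v⟩⟩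

theorem stmt_9_general {V ι : Type*} [Fintype V] [Fintype ι] (G : SimpleGraph V)
    (htrans : ∀ u v : V, ∃ g : G ≃g G, g u = v)
    (H : Subgroup (G ≃g G)) (cells : ι → Finset V)
    (hpart : ∀ v : V, ∃! i, v ∈ cells i)
    (horbit : ∀ i : ι, ∃ x ∈ cells i, ∀ y : V, y ∈ cells i ↔ ∃ g ∈ H, g x = y)
    (hsingleton : ∃ i : ι, ∃ x : V, cells i = {x})
    (Q : Matrix ι ι ℝ)
    (hQ : ∀ i j : ι, ∀ v ∈ cells i, ∑ w ∈ cells j, (G.dist v w : ℝ) = Q i j) :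
    {θ : ℝ | Q.HasEigenval θ} = {θ : ℝ | G.distMatrix.HasEigenval θ} := by
  obtain ⟨idx, hidx⟩ := exists_index_of_existsUnique_mem hpart
  choose rep hrep_mem hrep using horbit
  have hcells : ∀ j, cells j = Finset.univ.filter (idx · = j) := fun j => by ext w; simp [hidx]
  have hequit : ∀ v j, ∑ w with idx w = j, G.distMatrix v w = Q (idx v) j := fun v j => by
    rw [← hQ _ j v ((hidx v _).2 rfl), hcells]
    rfl
  ext θ
  rw [Set.mem_ofPred_eq, Set.mem_ofPred_eq, Matrix.hasEigenval_iff_of_sum_fiber_eq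
    (fun i => ⟨rep i, (hidx _ _).1 (hrep_mem i)⟩) hequit]
  refine ⟨fun ⟨F, hF0, hF, _⟩ => ⟨F, hF0, hF⟩, fun hθ => ?_⟩
  obtain ⟨i₀, x, hx⟩ := hsingleton
  have hfix : ∀ h ∈ H, h x = x := fun h hh => by
    have hrx : rep i₀ = x := by simpa [hx] using hrep_mem i₀
    simpa [hx] using (hrep i₀ (h x)).2 ⟨h, hh, by rw [hrx]⟩
  obtain ⟨F, hF0, hF, hinv⟩ := G.exists_distMatrix_eigenvector_invariant htrans hfix hθ
  have hconst : ∀ w, F w = F (rep (idx w)) := fun w => by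
    obtain ⟨h, hh, hw⟩ := (hrep (idx w) w).1 ((hidx _ _).2 rfl)
    exact (congrArg F hw).symm.trans (hinv h hh _)
  exact ⟨F, hF0, hF, fun v w hvw => by rw [hconst v, hconst w, hvw]⟩

theorem stmt_9 {V ι : Type*} [Fintype V] [Fintype ι] (G : SimpleGraph V)
    (hconn : G.Connected)
    (htrans : ∀ u v : V, ∃ g : G ≃g G, g u = v)
    (H : Subgroup (G ≃g G)) (cells : ι → Finset V)
    (hpart : ∀ v : V, ∃! i, v ∈ cells i)
    (horbit : ∀ i : ι, ∃ x ∈ cells i, ∀ y : V, y ∈ cells i ↔ ∃ g ∈ H, g x = y)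
    (hsingleton : ∃ i : ι, ∃ x : V, cells i = {x})
    (Q : Matrix ι ι ℝ)
    (hQ : ∀ i j : ι, ∀ v ∈ cells i, ∑ w ∈ cells j, (G.dist v w : ℝ) = Q i j) :
    {θ : ℝ | Q.HasEigenval θ} = {θ : ℝ | G.distMatrix.HasEigenval θ} :=
  stmt_9_general G htrans H cells hpart horbit hsingleton Q hQ
end
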